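/- Let θ ∈ (0,1) and let w ∈ H¹(0,1) satisfy w(1) = e^{2πiθ}w(0) and w(β) − w(α) = d_θ ∫_{Q₁} w(y) dy. Then |1 − (1 − β + α e^{−2πiθ}) d_θ (1 − e^{−2πiθ})^{-1}|² · |∫_{Q₁} w(y) dy|² ≤ 2 ( 4 + |1 − β + α e^{−2πiθ}|² |1 − e^{−2πiθ}|^{-2} ) ∫_{Q₁} |w'(y)|² dy. -/

import Mathlib

/-!
Put `q = e^{-2πiθ}`, `c = 1 - β + αq` and `I = ∫_{Q₁} w`. Since `w(0) = q w(1)`, subtracting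
boundary values gives `I = c w(1) + R` with `R = ∫₀^α (w - w(0)) + ∫_β^1 (w - w(1))`, while the
jump condition gives `(1 - q) w(1) = S + d_θ I` with `S = (w(α) - w(0)) + (w(1) - w(β))`.
Eliminating `w(1)`: `(1 - c d_θ (1 - q)⁻¹) I = c (1 - q)⁻¹ S + R`. Both `S` and `R` are bounded
by `N = ∫_{Q₁} |w'|`, and `N² ≤ |Q₁| ∫_{Q₁} |w'|² ≤ ∫_{Q₁} |w'|²` by Cauchy–Schwarz.
-/

open MeasureTheory Real Set
open scoped ComplexConjugate

noncomputable section

/-- `u ∈ H¹(0,1)` with (weak) derivative `u'`. -/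
def IsH1 (u u' : ℝ → ℂ) : Prop :=
  MemLp u' 2 (volume.restrict (Ioo (0:ℝ) 1)) ∧
  ∀ x ∈ Icc (0:ℝ) 1, u x = u 0 + ∫ t in (0:ℝ)..x, u' t

/-- `d_θ = (β − α)(1 − e^{−2πiθ})⁻¹(α + (1 − β)e^{−2πiθ})`. -/
def dTheta (α β θ : ℝ) : ℂ :=
  ((β : ℂ) - α) * (1 - Complex.exp (-(2 * Real.pi * Complex.I * θ)))⁻¹ *
    ((α : ℂ) + (1 - β) * Complex.exp (-(2 * Real.pi * Complex.I * θ)))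

theorem sq_setIntegral_norm_le {α E : Type*} [MeasurableSpace α] [NormedAddCommGroup E]
    {μ : Measure α} {s : Set α} (hs : μ s ≠ ⊤) {f : α → E} (hf : MemLp f 2 (μ.restrict s)) :
    (∫ x in s, ‖f x‖ ∂μ) ^ 2 ≤ μ.real s * ∫ x in s, ‖f x‖ ^ 2 ∂μ := by
  have : Fact (μ s < ⊤) := ⟨hs.lt_top⟩
  have h := integral_mul_norm_le_Lp_mul_Lq .two_two (f := fun x => ‖f x‖) (g := fun _ => (1 : ℝ))
    (by simpa using hf.norm) (memLp_const 1)
  simp only [norm_norm, norm_one, mul_one, one_pow, integral_const, smul_eq_mul,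
    measureReal_restrict_apply_univ, Real.rpow_two] at h
  rw [← Real.sqrt_eq_rpow, ← Real.sqrt_eq_rpow, ← Real.sqrt_mul
    (integral_nonneg fun _ => sq_nonneg _)] at h
  calc (∫ x in s, ‖f x‖ ∂μ) ^ 2 ≤ (√((∫ x in s, ‖f x‖ ^ 2 ∂μ) * μ.real s)) ^ 2 :=
        pow_le_pow_left₀ (integral_nonneg fun _ => norm_nonneg _) h 2
    _ = μ.real s * ∫ x in s, ‖f x‖ ^ 2 ∂μ := by
        rw [Real.sq_sqrt (by positivity), mul_comm]

theorem setIntegral_Ioo_union_Ioo {E : Type*} [NormedAddCommGroup E] [NormedSpace ℝ E]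
    {f : ℝ → E} {a b c d : ℝ} (hab : a ≤ b) (hbc : b ≤ c) (hcd : c ≤ d)
    (hf₁ : IntervalIntegrable f volume a b) (hf₂ : IntervalIntegrable f volume c d) :
    ∫ x in Ioo a b ∪ Ioo c d, f x = (∫ x in a..b, f x) + ∫ x in c..d, f x := by
  rw [intervalIntegrable_iff_integrableOn_Ioo_of_le hab] at hf₁
  rw [intervalIntegrable_iff_integrableOn_Ioo_of_le hcd] at hf₂
  have hdisj : Disjoint (Ioo a b) (Ioo c d) :=
    disjoint_left.2 fun x hx₁ hx₂ => (hx₁.2.trans_le hbc).not_gt hx₂.1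
  rw [setIntegral_union hdisj measurableSet_Ioo hf₁ hf₂, intervalIntegral.integral_of_le hab,
    intervalIntegral.integral_of_le hcd, integral_Ioc_eq_integral_Ioo,
    integral_Ioc_eq_integral_Ioo]

theorem Complex.exp_neg_two_pi_I_mul_ne_one {θ : ℝ} (hθ : ∀ n : ℤ, θ ≠ n) :
    Complex.exp (-(2 * π * Complex.I * θ)) ≠ 1 := by
  rw [Ne, Complex.exp_eq_one_iff]
  rintro ⟨n, hn⟩
  refine hθ (-n) ?_
  have h2πI : 2 * (π : ℂ) * Complex.I ≠ 0 := by simp [Real.pi_ne_zero, Complex.I_ne_zero]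
  have h : 2 * (π : ℂ) * Complex.I * θ = 2 * π * Complex.I * (-n : ℤ) := by
    push_cast; linear_combination -hn
  exact_mod_cast mul_left_cancel₀ h2πI h

theorem norm_mul_add_sq_le {R : Type*} [SeminormedRing R] {z S T : R} {N M : ℝ}
    (hS : ‖S‖ ≤ N) (hT : ‖T‖ ≤ N) (hN : N ^ 2 ≤ M) :
    ‖z * S + T‖ ^ 2 ≤ 2 * (4 + ‖z‖ ^ 2) * M := by
  have hN0 : 0 ≤ N := (norm_nonneg _).trans hS
  have h : ‖z * S + T‖ ≤ (‖z‖ + 1) * N := calc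
    ‖z * S + T‖ ≤ ‖z‖ * ‖S‖ + ‖T‖ := (norm_add_le _ _).trans (by gcongr; exact norm_mul_le _ _)
    _ ≤ (‖z‖ + 1) * N := by nlinarith [norm_nonneg z]
  calc ‖z * S + T‖ ^ 2 ≤ ((‖z‖ + 1) * N) ^ 2 := pow_le_pow_left₀ (norm_nonneg _) h 2
    _ ≤ 2 * (4 + ‖z‖ ^ 2) * M := by nlinarith [sq_nonneg (‖z‖ - 1), sq_nonneg N, norm_nonneg z]

namespace IsH1

variable {w w' : ℝ → ℂ} (hw : IsH1 w w')
include hw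

theorem integrableOn_deriv : IntegrableOn w' (Icc 0 1) :=
  (integrableOn_Icc_iff_integrableOn_Ioo).2 (hw.1.integrable one_le_two)

theorem intervalIntegrable_deriv {a b : ℝ} (ha : a ∈ Icc (0 : ℝ) 1) (hb : b ∈ Icc (0 : ℝ) 1) :
    IntervalIntegrable w' volume a b :=
  (hw.integrableOn_deriv.mono_set (uIcc_subset_Icc ha hb)).intervalIntegrable

theorem sub_eq_integral {x y : ℝ} (hx : x ∈ Icc (0 : ℝ) 1) (hy : y ∈ Icc (0 : ℝ) 1) :
    w y - w x = ∫ t in x..y, w' t := by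
  have h0 : (0 : ℝ) ∈ Icc (0 : ℝ) 1 := left_mem_Icc.2 zero_le_one
  rw [hw.2 y hy, hw.2 x hx, add_sub_add_left_eq_sub, intervalIntegral.integral_interval_sub_left
    (hw.intervalIntegrable_deriv h0 hy) (hw.intervalIntegrable_deriv h0 hx)]

theorem continuousOn : ContinuousOn w (Icc 0 1) := by
  have h01 : uIcc (0 : ℝ) 1 = Icc 0 1 := uIcc_of_le zero_le_one
  have h := intervalIntegral.continuousOn_primitive_interval (h01 ▸ hw.integrableOn_deriv)
  rw [h01] at h
  exact (continuousOn_const.add h).congr fun x hx => hw.2 x hx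

theorem norm_sub_le {a b x y : ℝ} (ha : 0 ≤ a) (hb : b ≤ 1) (hx : x ∈ Icc a b)
    (hy : y ∈ Icc a b) : ‖w y - w x‖ ≤ ∫ t in a..b, ‖w' t‖ := by
  have hab : a ≤ b := hx.1.trans hx.2
  have hsub : Icc a b ⊆ Icc 0 1 := Icc_subset_Icc ha hb
  have hxy : uIoc x y ⊆ Ioc a b := by
    simpa [uIoc_of_le hab] using uIoc_subset_uIoc_of_uIcc_subset_uIcc (c := a) (d := b)
      (by simpa [uIcc_of_le hab] using uIcc_subset_Icc hx hy)
  rw [hw.sub_eq_integral (hsub hx) (hsub hy), intervalIntegral.integral_of_le hab]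
  calc ‖∫ t in x..y, w' t‖ ≤ ∫ t in uIoc x y, ‖w' t‖ :=
        intervalIntegral.norm_integral_le_integral_norm_uIoc
    _ ≤ ∫ t in Ioc a b, ‖w' t‖ :=
        setIntegral_mono_set (hw.integrableOn_deriv.mono_set
          (Ioc_subset_Icc_self.trans hsub)).norm
          (Filter.Eventually.of_forall fun _ => norm_nonneg _) hxy.eventuallyLE

theorem norm_integral_sub_le {a b p : ℝ} (ha : 0 ≤ a) (hb : b ≤ 1) (hp : p ∈ Icc a b) :
    ‖∫ y in a..b, (w y - w p)‖ ≤ (b - a) * ∫ t in a..b, ‖w' t‖ := by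
  have hab : a ≤ b := hp.1.trans hp.2
  have h := intervalIntegral.norm_integral_le_of_norm_le_const fun y hy =>
    hw.norm_sub_le ha hb hp (Ioc_subset_Icc_self (uIoc_of_le hab ▸ hy))
  rwa [abs_of_nonneg (sub_nonneg.2 hab), mul_comm] at h

theorem setIntegral_Ioo_union_Ioo_eq_add_integral_sub {α β : ℝ} (hα : 0 ≤ α) (hαβ : α ≤ β)
    (hβ : β ≤ 1) :
    ∫ y in Ioo 0 α ∪ Ioo β 1, w y = α * w 0 + (1 - β) * w 1 +
      ((∫ y in 0..α, (w y - w 0)) + ∫ y in β..1, (w y - w 1)) := by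
  have hint : ∀ {a b : ℝ}, 0 ≤ a → a ≤ b → b ≤ 1 → IntervalIntegrable w volume a b :=
    fun ha hab hb => (hw.continuousOn.mono (uIcc_subset_Icc ⟨ha, hab.trans hb⟩
      ⟨ha.trans hab, hb⟩)).intervalIntegrable
  rw [setIntegral_Ioo_union_Ioo hα hαβ hβ (hint le_rfl hα (hαβ.trans hβ))
    (hint (hα.trans hαβ) hβ le_rfl),
    intervalIntegral.integral_sub (hint le_rfl hα (hαβ.trans hβ)) intervalIntegrable_const,
    intervalIntegral.integral_sub (hint (hα.trans hαβ) hβ le_rfl) intervalIntegrable_const]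
  simp only [intervalIntegral.integral_const, Complex.real_smul]
  push_cast
  ring

theorem sq_integral_norm_deriv_le {s : Set ℝ} (hs : s ⊆ Ioo 0 1) :
    (∫ y in s, ‖w' y‖) ^ 2 ≤ ∫ y in s, ‖w' y‖ ^ 2 := by
  have hvol : volume.real s ≤ 1 :=
    (measureReal_mono hs measure_Ioo_lt_top.ne).trans (by simp)
  calc (∫ y in s, ‖w' y‖) ^ 2 ≤ volume.real s * ∫ y in s, ‖w' y‖ ^ 2 :=
        sq_setIntegral_norm_le ((measure_mono hs).trans_lt measure_Ioo_lt_top).ne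
          (hw.1.mono_measure (Measure.restrict_mono hs le_rfl))
    _ ≤ ∫ y in s, ‖w' y‖ ^ 2 :=
        mul_le_of_le_one_left (integral_nonneg fun _ => sq_nonneg _) hvol

section TwoIntervals

variable {α β : ℝ} (hα : 0 ≤ α) (hαβ : α ≤ β) (hβ : β ≤ 1)
include hα hαβ hβ

theorem norm_sub_add_sub_le :
    ‖(w α - w 0) + (w 1 - w β)‖ ≤ (∫ t in 0..α, ‖w' t‖) + ∫ t in β..1, ‖w' t‖ :=
  (norm_add_le _ _).trans (add_le_add
    (hw.norm_sub_le le_rfl (hαβ.trans hβ) ⟨le_rfl, hα⟩ ⟨hα, le_rfl⟩)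
    (hw.norm_sub_le (hα.trans hαβ) le_rfl ⟨le_rfl, hβ⟩ ⟨hβ, le_rfl⟩))

theorem norm_integral_sub_add_integral_sub_le :
    ‖(∫ y in 0..α, (w y - w 0)) + ∫ y in β..1, (w y - w 1)‖ ≤
      (∫ t in 0..α, ‖w' t‖) + ∫ t in β..1, ‖w' t‖ := by
  have hnonneg : ∀ {a b : ℝ}, a ≤ b → 0 ≤ ∫ t in a..b, ‖w' t‖ :=
    fun hab => intervalIntegral.integral_nonneg hab fun _ _ => norm_nonneg _
  refine (norm_add_le _ _).trans (add_le_add ?_ ?_)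
  · refine (hw.norm_integral_sub_le le_rfl (hαβ.trans hβ) ⟨le_rfl, hα⟩).trans ?_
    exact mul_le_of_le_one_left (hnonneg hα) (by linarith)
  · refine (hw.norm_integral_sub_le (hα.trans hαβ) le_rfl ⟨hβ, le_rfl⟩).trans ?_
    exact mul_le_of_le_one_left (hnonneg hβ) (by linarith)

theorem sq_integral_norm_deriv_add_le :
    ((∫ t in 0..α, ‖w' t‖) + ∫ t in β..1, ‖w' t‖) ^ 2 ≤
      ∫ y in Ioo 0 α ∪ Ioo β 1, ‖w' y‖ ^ 2 := by
  have hα' : α ∈ Icc (0 : ℝ) 1 := ⟨hα, hαβ.trans hβ⟩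
  have hβ' : β ∈ Icc (0 : ℝ) 1 := ⟨hα.trans hαβ, hβ⟩
  rw [← setIntegral_Ioo_union_Ioo hα hαβ hβ
    (hw.intervalIntegrable_deriv (left_mem_Icc.2 zero_le_one) hα').norm
    (hw.intervalIntegrable_deriv hβ' (right_mem_Icc.2 zero_le_one)).norm]
  exact hw.sq_integral_norm_deriv_le
    (union_subset (Ioo_subset_Ioo_right hα'.2) (Ioo_subset_Ioo_left hβ'.1))

end TwoIntervals

end IsH1

theorem stmt_10 (α β : ℝ) (hα : 0 < α) (hαβ : α < β) (hβ : β < 1)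
    (θ : ℝ) (hθ : θ ∈ Ioo (0:ℝ) 1)
    (w w' : ℝ → ℂ) (hw : IsH1 w w')
    (hwq : w 1 = Complex.exp (2 * Real.pi * Complex.I * θ) * w 0)
    (hwd : w β - w α = dTheta α β θ * ∫ y in Ioo (0:ℝ) α ∪ Ioo β 1, w y) :
    ‖(1 : ℂ) - ((1 : ℂ) - β + α * Complex.exp (-(2 * Real.pi * Complex.I * θ))) *
          dTheta α β θ * (1 - Complex.exp (-(2 * Real.pi * Complex.I * θ)))⁻¹‖ ^ 2 *
        ‖∫ y in Ioo (0:ℝ) α ∪ Ioo β 1, w y‖ ^ 2 ≤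
      2 * (4 + ‖(1 : ℂ) - β + α * Complex.exp (-(2 * Real.pi * Complex.I * θ))‖ ^ 2 *
            (‖(1 : ℂ) - Complex.exp (-(2 * Real.pi * Complex.I * θ))‖ ^ 2)⁻¹) *
        ∫ y in Ioo (0:ℝ) α ∪ Ioo β 1, ‖w' y‖ ^ 2 := by
  set q := Complex.exp (-(2 * Real.pi * Complex.I * θ))
  have hθn : ∀ n : ℤ, θ ≠ n := by
    rintro n rfl
    have : (0 : ℤ) < n ∧ n < 1 := ⟨by exact_mod_cast hθ.1, by exact_mod_cast hθ.2⟩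
    omega
  have hq : 1 - q ≠ 0 := sub_ne_zero.2 (Complex.exp_neg_two_pi_I_mul_ne_one hθn).symm
  have hw0 : w 0 = q * w 1 := by
    rw [hwq, ← mul_assoc, ← Complex.exp_add, neg_add_cancel, Complex.exp_zero, one_mul]
  have hI : ∫ y in Ioo (0:ℝ) α ∪ Ioo β 1, w y = (1 - β + α * q) * w 1 +
      ((∫ y in (0 : ℝ)..α, (w y - w 0)) + ∫ y in β..(1 : ℝ), (w y - w 1)) := by
    rw [hw.setIntegral_Ioo_union_Ioo_eq_add_integral_sub hα.le hαβ.le hβ.le, hw0]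
    ring
  have hS : (w α - w 0) + (w 1 - w β) =
      (1 - q) * w 1 - dTheta α β θ * ∫ y in Ioo (0:ℝ) α ∪ Ioo β 1, w y := by
    rw [← hwd, hw0]
    ring
  set I := ∫ y in Ioo (0:ℝ) α ∪ Ioo β 1, w y
  set S := (w α - w 0) + (w 1 - w β)
  set R := (∫ y in (0 : ℝ)..α, (w y - w 0)) + ∫ y in β..(1 : ℝ), (w y - w 1)
  have helim : (1 - (1 - β + α * q) * dTheta α β θ * (1 - q)⁻¹) * I
      = (1 - β + α * q) * (1 - q)⁻¹ * S + R := by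
    linear_combination hI - (1 - β + α * q) * (1 - q)⁻¹ * hS -
      (1 - β + α * q) * w 1 * mul_inv_cancel₀ hq
  calc _ = ‖(1 - β + α * q) * (1 - q)⁻¹ * S + R‖ ^ 2 := by rw [← mul_pow, ← norm_mul, helim]
    _ ≤ _ := norm_mul_add_sq_le (hw.norm_sub_add_sub_le hα.le hαβ.le hβ.le)
        (hw.norm_integral_sub_add_integral_sub_le hα.le hαβ.le hβ.le)
        (hw.sq_integral_norm_deriv_add_le hα.le hαβ.le hβ.le)
    _ = _ := by rw [norm_mul, norm_inv, mul_pow, inv_pow]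

end
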